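/- Let A be a Cevian arrangement of apical hyperplanes over a point basis N̂ of a projective geometry P, with associated graph Γ = (N, E) and rank function rk_P(S) := codim ⋂_{e∈S} h(ê). If an edge set S ⊆ E has a pendant edge e (a link of S one of whose endpoints is incident with no other edge of S), then rk_P(S) = rk_P(S∖e) + 1. -/

import Mathlib

open scoped Classical

/-! ## Graphs with parallel links and half edges -/

/-- A multigraph: each edge has a finite set of endpoints
(one endpoint for a half edge, two endpoints for a link). -/
structure MGraph (N : Type*) (E : Type*) where
  ends : E → Finset N

namespace MGraph

variable {N E : Type*} (G : MGraph N E)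

/-- A link has two distinct endpoints. -/
def IsLink (e : E) : Prop := (G.ends e).card = 2

/-- A half edge has exactly one endpoint. -/
def IsHalfEdge (e : E) : Prop := (G.ends e).card = 1

/-- The set of nodes of a set of edges. -/
def nodeSet (S : Set E) : Set N := {v | ∃ e ∈ S, v ∈ G.ends e}

/-- The nodes of a finite set of edges. -/
noncomputable def nodesOf (S : Finset E) : Finset N := S.biUnion G.ends

/-- The degree of a node in a finite edge set. -/
noncomputable def degreeIn (S : Finset E) (v : N) : ℕ :=
  (S.filter (fun e => v ∈ G.ends e)).card

/-- Two nodes joined by an edge of `S`. -/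
def adjIn (S : Set E) (u v : N) : Prop := ∃ e ∈ S, u ∈ G.ends e ∧ v ∈ G.ends e

/-- Connectivity of nodes through edges of `S`. -/
def nodeConn (S : Set E) : N → N → Prop := Relation.ReflTransGen (G.adjIn S)

/-- The components of the spanning subgraph `(N, S)`, as sets of nodes. -/
def components (S : Set E) : Set (Set N) := {W | ∃ v : N, W = {u | G.nodeConn S u v}}

/-- The number of components of the spanning subgraph `(N, S)`. -/
noncomputable def numComponents (S : Set E) : ℕ := Nat.card ↥(G.components S)

/-- The components of the non-spanning subgraph `(N(S), S)`. -/
def componentsOn (S : Set E) : Set (Set N) :=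
  {W | ∃ v ∈ G.nodeSet S, W = {u | G.nodeConn S u v}}

/-- The edges of `S` whose endpoints all lie in a node set `W`. -/
def edgesIn (S : Set E) (W : Set N) : Set E := {e | e ∈ S ∧ ∀ v ∈ G.ends e, v ∈ W}

/-- An edge set is connected if any two of its edges are joined through
consecutively intersecting edges of the set. -/
def ConnEdges (S : Set E) : Prop :=
  ∀ e ∈ S, ∀ f ∈ S, Relation.ReflTransGen
    (fun a b => a ∈ S ∧ b ∈ S ∧ ∃ v : N, v ∈ G.ends a ∧ v ∈ G.ends b) e f

/-- A circle: the edge set of a connected subgraph in which every node has degree 2. -/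
def IsCircle (C : Finset E) : Prop :=
  C.Nonempty ∧ (∀ e ∈ C, G.IsLink e) ∧ G.ConnEdges ↑C ∧
    ∀ v ∈ G.nodesOf C, G.degreeIn C v = 2

/-- A (simple, open) path joining two distinct nodes `u` and `v`. -/
def IsPath (Q : Finset E) (u v : N) : Prop :=
  Q.Nonempty ∧ u ≠ v ∧ (∀ e ∈ Q, G.IsLink e) ∧ G.ConnEdges ↑Q ∧
    u ∈ G.nodesOf Q ∧ v ∈ G.nodesOf Q ∧
    G.degreeIn Q u = 1 ∧ G.degreeIn Q v = 1 ∧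
    ∀ w ∈ G.nodesOf Q, w ≠ u → w ≠ v → G.degreeIn Q w = 2

/-- A simple graph: all edges are links and no two edges have the same endpoints. -/
def IsSimple : Prop := (∀ e : E, G.IsLink e) ∧ Function.Injective G.ends

/-- The graph is connected. -/
def IsConnected : Prop := ∀ u v : N, G.nodeConn Set.univ u v

/-- Inseparable graph: connected, and for every partition of the edge set into two
nonempty parts the two parts share at least two nodes. -/
def IsInseparable : Prop :=
  G.IsConnected ∧ ∀ A B : Set E, A.Nonempty → B.Nonempty → Disjoint A B →
    A ∪ B = Set.univ → ∃ u v : N, u ≠ v ∧ u ∈ G.nodeSet A ∧ u ∈ G.nodeSet B ∧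
      v ∈ G.nodeSet A ∧ v ∈ G.nodeSet B

/-- A linear class of circles: every member is a circle and no theta subgraph (the
union of three pairwise internally disjoint paths with the same two endpoints)
contains exactly two members of the class. -/
def IsLinearClass (B : Set (Finset E)) : Prop :=
  (∀ C ∈ B, G.IsCircle C) ∧
  ∀ u v : N, ∀ P₁ P₂ P₃ : Finset E,
    G.IsPath P₁ u v → G.IsPath P₂ u v → G.IsPath P₃ u v →
    Disjoint P₁ P₂ → Disjoint P₁ P₃ → Disjoint P₂ P₃ →
    (↑(G.nodesOf P₁) ∩ ↑(G.nodesOf P₂) : Set N) = {u, v} →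
    (↑(G.nodesOf P₁) ∩ ↑(G.nodesOf P₃) : Set N) = {u, v} →
    (↑(G.nodesOf P₂) ∩ ↑(G.nodesOf P₃) : Set N) = {u, v} →
    P₁ ∪ P₂ ∈ B → P₁ ∪ P₃ ∈ B → P₂ ∪ P₃ ∈ B

/-- A balanced edge set with respect to a class `B` of balanced circles:
no half edges, and every circle inside it belongs to `B`. -/
def IsBalancedSet (B : Set (Finset E)) (S : Set E) : Prop :=
  (∀ e ∈ S, G.IsLink e) ∧ ∀ C : Finset E, ↑C ⊆ S → G.IsCircle C → C ∈ B

/-- The number of balanced components of the spanning subgraph `(N, S)`. -/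
noncomputable def numBalComponents (B : Set (Finset E)) (S : Set E) : ℕ :=
  Nat.card ↥{W : Set N | W ∈ G.components S ∧ G.IsBalancedSet B (G.edgesIn S W)}

/-- Frame matroid rank function: `rk S = #N - b(S)`. -/
noncomputable def frameRk [Fintype N] (B : Set (Finset E)) (S : Set E) : ℕ :=
  Fintype.card N - G.numBalComponents B S

/-- Graphic (cycle) matroid rank function: `rk S = #N - c(S)`. -/
noncomputable def graphicRk [Fintype N] (S : Set E) : ℕ :=
  Fintype.card N - G.numComponents S

/-- Graphic matroid rank of a finite edge set, computed inside its own node set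
(valid also for infinite graphs): `rk S = #N(S) - c(N(S), S)`. -/
noncomputable def graphicRkOn (S : Finset E) : ℕ :=
  (G.nodesOf S).card - Nat.card ↥(G.componentsOn ↑S)

/-- Extended lift matroid rank function on `E ⊕ Unit`, where `Sum.inr ()` is the
extra point `e₀`: `rk S = #N - c(S ∩ E)` if `S ⊆ E` is balanced, and
`#N - c(S ∩ E) + 1` if `S` is unbalanced or contains `e₀`. -/
noncomputable def liftRk [Fintype N] (B : Set (Finset E)) (S : Set (E ⊕ Unit)) : ℕ :=
  if G.IsBalancedSet B {e | Sum.inl e ∈ S} ∧ Sum.inr () ∉ S then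
    Fintype.card N - G.numComponents {e | Sum.inl e ∈ S}
  else Fintype.card N - G.numComponents {e | Sum.inl e ∈ S} + 1

/-- Closed sets of the frame matroid (via the rank function; the matroid is finitary). -/
def FrameClosed [Fintype N] (B : Set (Finset E)) (S : Set E) : Prop :=
  ∀ e : E, (∃ S₀ : Finset E, ↑S₀ ⊆ S ∧
    G.frameRk B ↑(insert e S₀) = G.frameRk B ↑S₀) → e ∈ S

/-- Closed sets of the extended lift matroid. -/
def LiftClosed [Fintype N] (B : Set (Finset E)) (S : Set (E ⊕ Unit)) : Prop :=
  ∀ x : E ⊕ Unit, (∃ S₀ : Finset (E ⊕ Unit), ↑S₀ ⊆ S ∧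
    G.liftRk B ↑(insert x S₀) = G.liftRk B ↑S₀) → x ∈ S

/-- The balance-closure of an edge set. -/
def bcl (B : Set (Finset E)) (S : Set E) : Set E :=
  S ∪ {e | ∃ C ∈ B, e ∈ C ∧ ↑C ⊆ S ∪ {e}}

/-- The subgraph of all links, as a graph on the same nodes. -/
def linkGraph : MGraph N {e : E // G.IsLink e} := ⟨fun e => G.ends e.val⟩

/-- Restriction of a class of circles to the subgraph of links. -/
def linkBal (B : Set (Finset E)) : Set (Finset {e : E // G.IsLink e}) :=
  {C | C.image Subtype.val ∈ B}

/-- The subgraph on a subset of the edges (spanning all nodes). -/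
def sub (D : Set E) : MGraph N ↥D := ⟨fun f => G.ends f.val⟩

end MGraph

/-- A graph together with a distinguished class of "balanced" circles.
(It is a biased graph when the class is a linear class.) -/
structure BiasedGraph (N E : Type*) extends MGraph N E where
  Bal : Set (Finset E)

/-- The complete graph on a node set `N`. -/
def completeMGraph (N : Type*) : MGraph N {q : Finset N // q.card = 2} := ⟨Subtype.val⟩

/-- A gain graph with gain group `Γ`: each edge is given by a source, a target
(equal for a half edge) and a gain in the direction from source to target. -/
structure GainGraph (N E : Type*) (Γ : Type*) [Group Γ] extends MGraph N E where
  src : E → N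
  tgt : E → N
  gain : E → Γ
  ends_eq : ∀ e : E, ends e = {src e, tgt e}

namespace GainGraph

variable {N E Γ : Type*} [Group Γ] (Φ : GainGraph N E Γ)

/-- The gain of an edge in the direction from `u` to `v`. -/
noncomputable def ogain (e : E) (u v : N) : Γ :=
  if Φ.src e = u ∧ Φ.tgt e = v then Φ.gain e else (Φ.gain e)⁻¹

/-- A balanced circle of a gain graph: a circle whose gain function is given by a
potential on the nodes (equivalently, the product of its gains along a cyclic
orientation is the identity). -/
def BalancedCircle (C : Finset E) : Prop :=
  Φ.toMGraph.IsCircle C ∧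
    ∃ θ : N → Γ, ∀ e ∈ C, Φ.gain e = (θ (Φ.src e))⁻¹ * θ (Φ.tgt e)

/-- The biased graph `⟨Φ⟩` of a gain graph. -/
def biasedGraph : BiasedGraph N E := { Φ.toMGraph with Bal := {C | Φ.BalancedCircle C} }

end GainGraph

/-- A biased expansion of a graph `Δ` along a projection `p`: `p` is surjective,
preserves endpoints, and every circle of `Δ` with a chosen lift of all but one of
its edges has a unique completion to a balanced circle. -/
def IsBiasedExpansion {N E E' : Type*} (G : MGraph N E) (B : Set (Finset E))
    (Δ : MGraph N E') (p : E → E') : Prop :=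
  Function.Surjective p ∧ (∀ e : E, G.ends e = Δ.ends (p e)) ∧
  ∀ C : Finset E', Δ.IsCircle C → ∀ e₀ ∈ C, ∀ s : E' → E,
    (∀ f ∈ C.erase e₀, p (s f) = f) →
    ∃! t : E, p t = e₀ ∧ (C.erase e₀).image s ∪ {t} ∈ B

/-! ## Axiomatic (synthetic) projective geometry -/

/-- An axiomatic projective geometry: a point set with a line through any two
points, unique when the points are distinct, every line having at least three
points, and satisfying the Veblen–Young axiom. -/
structure ProjGeom (P : Type*) where
  line : P → P → Set P
  line_self : ∀ p : P, line p p = {p}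
  line_symm : ∀ p q : P, line p q = line q p
  left_mem_line : ∀ p q : P, p ∈ line p q
  right_mem_line : ∀ p q : P, q ∈ line p q
  line_unique : ∀ p q x y : P, p ≠ q → x ∈ line p q → y ∈ line p q → x ≠ y →
    line x y = line p q
  exists_third : ∀ p q : P, p ≠ q → ∃ r ∈ line p q, r ≠ p ∧ r ≠ q
  veblen : ∀ p q r s x : P, p ≠ q → r ≠ s → p ≠ r → q ≠ s →
    x ∈ line p q → x ∈ line r s → ∃ y, y ∈ line p r ∧ y ∈ line q s

namespace ProjGeom

variable {P : Type*} (G : ProjGeom P)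

/-- A flat (subspace): a line-closed set of points. -/
def IsFlat (t : Set P) : Prop := ∀ p ∈ t, ∀ q ∈ t, G.line p q ⊆ t

/-- The span of a point set: the smallest flat containing it. -/
def span (A : Set P) : Set P := ⋂₀ {t : Set P | G.IsFlat t ∧ A ⊆ t}

/-- An independent point set: no point is in the span of the others. -/
def Indep (A : Set P) : Prop := ∀ a ∈ A, a ∉ G.span (A \ {a})

/-- The (matroid) rank of a point set: the largest cardinality of a finite
independent subset. -/
noncomputable def rank (A : Set P) : ℕ :=
  sSup {n : ℕ | ∃ B : Finset P, ↑B ⊆ A ∧ G.Indep ↑B ∧ B.card = n}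

/-- A hyperplane: a maximal proper flat. -/
def IsHyperplane (h : Set P) : Prop :=
  G.IsFlat h ∧ h ≠ Set.univ ∧ ∀ t : Set P, G.IsFlat t → h ⊆ t → t = h ∨ t = Set.univ

/-- The codimension of a flat: the least number of hyperplanes intersecting in it. -/
noncomputable def codim (t : Set P) : ℕ :=
  sInf {n : ℕ | ∃ H : Finset (Set P), H.card = n ∧ (∀ h ∈ H, G.IsHyperplane h) ∧
    ⋂₀ ↑H = t}

variable {N : Type*}

/-- A cross-flat with respect to an independent family `ν`: a flat containing
none of the points `ν v`. -/
def crossFlat (ν : N → P) (t : Set P) : Prop := G.IsFlat t ∧ ∀ v : N, ν v ∉ t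

/-- The union of all edge lines of the independent family `ν`. -/
def edgeLineUnion (ν : N → P) : Set P :=
  ⋃ (v : N) (w : N) (_ : v ≠ w), G.line (ν v) (ν w)

/-! ### The Menelaean (point) construction for the frame matroid -/

/-- The underlying graph of the Menelaean construction `Ω(N̂, Ehat)`: a point of `Ehat`
in `N̂` is a half edge, any other point is a link joining the ends of its edge line. -/
noncomputable def menGraph (ν : N → P) (Ehat : Set P)
    (hE : ∀ x ∈ Ehat, x ∉ Set.range ν →
      ∃ pr : N × N, pr.1 ≠ pr.2 ∧ x ∈ G.line (ν pr.1) (ν pr.2)) :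
    MGraph N ↥Ehat where
  ends e :=
    if h : (e : P) ∈ Set.range ν then {(show ∃ v : N, ν v = ↑e from h).choose}
    else {(hE e e.2 h).choose.1, (hE e e.2 h).choose.2}

/-- The balanced circles of the Menelaean construction: circles whose point set
lies in a cross-flat. -/
noncomputable def menBal (ν : N → P) (Ehat : Set P)
    (hE : ∀ x ∈ Ehat, x ∉ Set.range ν →
      ∃ pr : N × N, pr.1 ≠ pr.2 ∧ x ∈ G.line (ν pr.1) (ν pr.2)) :
    Set (Finset ↥Ehat) :=
  {C | (G.menGraph ν Ehat hE).IsCircle C ∧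
    ∃ t : Set P, G.crossFlat ν t ∧ ∀ e ∈ C, (e : P) ∈ t}

/-! ### The Cevian (hyperplane) construction for the frame matroid -/

/-- A Cevian arrangement over the point basis `ν`, described by its associated
graph `Γ` and its apex function: a link `e` with endpoints `v, w` has its apex on
the edge line `v̂ŵ`, off the basis; a half edge at `v` has apex `ν v`. -/
def IsCevian {E : Type*} (ν : N → P) (Γ : MGraph N E) (apex : E → P) : Prop :=
  ∀ e : E,
    (∃ v w : N, v ≠ w ∧ Γ.ends e = ({v, w} : Finset N) ∧
      apex e ∈ G.line (ν v) (ν w) ∧ apex e ∉ Set.range ν) ∨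
    (∃ v : N, Γ.ends e = ({v} : Finset N) ∧ apex e = ν v)

/-- The apical hyperplane of an edge of a Cevian arrangement. -/
def cevHyp {E : Type*} (ν : N → P) (Γ : MGraph N E) (apex : E → P) (e : E) : Set P :=
  if Γ.IsLink e then G.span ((ν '' {u : N | u ∉ Γ.ends e}) ∪ {apex e})
  else G.span (ν '' {u : N | u ∉ Γ.ends e})

/-- The rank function of a Cevian arrangement:
the codimension of the intersection of the corresponding apical hyperplanes. -/
noncomputable def cevRk {E : Type*} (ν : N → P) (Γ : MGraph N E) (apex : E → P)
    (S : Finset E) : ℕ :=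
  G.codim (⋂ e ∈ S, G.cevHyp ν Γ apex e)

/-- The balanced circles of a Cevian arrangement:
circles of deficient hyperplane-intersection rank. -/
noncomputable def cevBal {E : Type*} (ν : N → P) (Γ : MGraph N E) (apex : E → P) :
    Set (Finset E) :=
  {C | Γ.IsCircle C ∧ G.cevRk ν Γ apex C < C.card}

/-! ### The orthographic (point) construction for the lift matroid -/

/-- The projection of the orthographic construction: each point of `Ehat` lies on the
edge line `z'(f)e₀` of a unique edge `f` of `Δ`. -/
noncomputable def orthoProj {E' : Type*} (z' : E' → P) (e₀ : P) (Ehat : Set P)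
    (hE : ∀ x ∈ Ehat, ∃ f : E', x ∈ G.line (z' f) e₀) : ↥Ehat → E' :=
  fun e => (hE e e.2).choose

/-- The underlying graph of the orthographic construction `Ω₀(Ehat)`. -/
noncomputable def orthoGraph {E' : Type*} (Δ : MGraph N E') (z' : E' → P) (e₀ : P)
    (Ehat : Set P) (hE : ∀ x ∈ Ehat, ∃ f : E', x ∈ G.line (z' f) e₀) : MGraph N ↥Ehat :=
  ⟨fun e => Δ.ends (G.orthoProj z' e₀ Ehat hE e)⟩

/-- The balanced circles of the orthographic construction:
circles spanning a cross-flat (a flat not containing `e₀`). -/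
noncomputable def orthoBal {E' : Type*} (Δ : MGraph N E') (z' : E' → P) (e₀ : P)
    (Ehat : Set P) (hE : ∀ x ∈ Ehat, ∃ f : E', x ∈ G.line (z' f) e₀) : Set (Finset ↥Ehat) :=
  {C | (G.orthoGraph Δ z' e₀ Ehat hE).IsCircle C ∧
    e₀ ∉ G.span (Subtype.val '' (↑C : Set ↥Ehat))}

end ProjGeom

/-! ### Synthetic affinographic arrangements -/

/-- A synthetic affinographic arrangement of hyperplanes in the affine geometry
obtained from the projective geometry `G` by deleting the ideal hyperplane `hinf`:
a family of hyperplanes `hP e` (given by their projective completions, with affine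
parts `hP e \ hinf`), with parallel classes indexed by the edges of a graph `Δ` with
links only via the surjection `π`; hyperplanes in the class of `f` have common
ideal part `ideal f`, and the matroid of the ideal parts (rank = codimension inside
`hinf`) is the graphic matroid of `Δ`. -/
def IsAffinographic {P N E E' : Type*} [Fintype N] (G : ProjGeom P) (hinf : Set P)
    (hP : E → Set P) (Δ : MGraph N E') (π : E → E') (ideal : E' → Set P) : Prop :=
  G.IsHyperplane hinf ∧ (∀ f : E', Δ.IsLink f) ∧ Function.Surjective π ∧
  Function.Injective hP ∧ Function.Injective ideal ∧
  (∀ e : E, G.IsHyperplane (hP e) ∧ hP e ≠ hinf ∧ hP e ∩ hinf = ideal (π e)) ∧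
  ∀ S : Finset E', Δ.graphicRk (↑S : Set E') = G.codim (hinf ∩ ⋂ f ∈ S, ideal f) - 1

/-- The underlying graph of the biased graph `Ω(A)` of an affinographic
arrangement: each edge of `Δ` is replaced by the edges of its parallel class. -/
def affinoGraph {N E E' : Type*} (Δ : MGraph N E') (π : E → E') : MGraph N E :=
  ⟨fun e => Δ.ends (π e)⟩

/-- The affine intersection `t_A(S)` of the hyperplanes of `S`. -/
def affInter {P E : Type*} (hinf : Set P) (hP : E → Set P) (S : Set E) : Set P :=
  ⋂ e ∈ S, (hP e \ hinf)

/-- The balanced circles of `Ω(A)`: digons over a single edge of `Δ` are unbalanced;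
any other circle is balanced iff its affine intersection is nonempty. -/
def affinoBal {P N E E' : Type*} (_G : ProjGeom P) (hinf : Set P) (hP : E → Set P)
    (Δ : MGraph N E') (π : E → E') : Set (Finset E) :=
  {C | (affinoGraph Δ π).IsCircle C ∧ ¬(∃ f : E', ∀ e ∈ C, π e = f) ∧
    (affInter hinf hP ↑C).Nonempty}

/-! ### Coordinatized projective spaces -/

/-- The rank of a finite set of points of a coordinatized projective space:
the dimension of the linear span of representative vectors. -/
noncomputable def projRank (F : Type*) {V : Type*} [DivisionRing F] [AddCommGroup V]
    [Module F V] (A : Finset (Projectivization F V)) : ℕ :=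
  Module.finrank F ↥(Submodule.span F (Projectivization.rep '' (↑A : Set (Projectivization F V))))

/-- The edge set of the full biased graph `Ω^•`: the edges of `Ω` together with a
new half edge at every node not already supporting one. -/
def FullE {N E : Type*} (Ω : BiasedGraph N E) : Type _ :=
  E ⊕ {v : N // ∀ e : E, Ω.ends e ≠ ({v} : Finset N)}

/-- The underlying graph of the full biased graph `Ω^•`. -/
def fullGraph {N E : Type*} (Ω : BiasedGraph N E) : MGraph N (FullE Ω) :=
  ⟨Sum.elim Ω.ends (fun v => {v.val})⟩

/-- The balanced circles of the full biased graph `Ω^•` (circles avoid half edges). -/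
def fullBal {N E : Type*} (Ω : BiasedGraph N E) : Set (Finset (FullE Ω)) :=
  {C | ∃ C₀ ∈ Ω.Bal, C = C₀.image Sum.inl}

/-!
Every apical hyperplane is a hyperplane of `P`, and if `v` is the pendant end of `e`, the
basis point `ν v` lies on the apical hyperplanes of all edges of `S ∖ e` (it is not one of
their ends) but not on `h(e)`. So it suffices that cutting a finite intersection `t` of
hyperplanes by a hyperplane `h` missing a point `x ∈ t` raises the codimension by exactly one.

Only the lower bound needs an idea: among hyperplanes `H'` cutting out `t ∩ h` some `h₀` misses
`x`, and projecting the others from `x` through `h₀`, `k ↦ span (x, k ∩ h₀)`, yields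
`|H'| - 1` hyperplanes cutting out `t`. That these projections are hyperplanes, and that they
cut out `t`, rests on the description of `span (x, s)` for a flat `s` as the union of the lines
joining `x` to `s`, which is where the Veblen–Young axiom enters.
-/

namespace ProjGeom

variable {P : Type*} (G : ProjGeom P)

lemma line_eq_of_mem {x a p : P} (hp : p ∈ G.line x a) (hpx : p ≠ x) :
    G.line x p = G.line x a := by
  rcases eq_or_ne x a with rfl | hxa
  · rw [G.line_self] at hp
    exact absurd hp hpx
  · exact G.line_unique x a x p hxa (G.left_mem_line x a) hp (Ne.symm hpx)

lemma mem_line_exchange {x a p : P} (hp : p ∈ G.line x a) (hpx : p ≠ x) :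
    a ∈ G.line x p :=
  G.line_eq_of_mem hp hpx ▸ G.right_mem_line x a

lemma isFlat_sInter {T : Set (Set P)} (hT : ∀ t ∈ T, G.IsFlat t) : G.IsFlat (⋂₀ T) :=
  fun _ hp _ hq _ hy => Set.mem_sInter.2 fun t ht =>
    hT t ht _ (Set.mem_sInter.1 hp t ht) _ (Set.mem_sInter.1 hq t ht) hy

lemma isFlat_inter {s t : Set P} (hs : G.IsFlat s) (ht : G.IsFlat t) : G.IsFlat (s ∩ t) :=
  fun p hp q hq => Set.subset_inter (hs p hp.1 q hq.1) (ht p hp.2 q hq.2)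

lemma subset_span (A : Set P) : A ⊆ G.span A :=
  fun _ hx => Set.mem_sInter.2 fun _ ht => ht.2 hx

lemma isFlat_span (A : Set P) : G.IsFlat (G.span A) :=
  G.isFlat_sInter fun _ ht => ht.1

lemma span_subset {A t : Set P} (ht : G.IsFlat t) (h : A ⊆ t) : G.span A ⊆ t :=
  Set.sInter_subset_of_mem ⟨ht, h⟩

lemma span_mono {A B : Set P} (h : A ⊆ B) : G.span A ⊆ G.span B :=
  G.span_subset (G.isFlat_span B) (h.trans (G.subset_span B))

lemma mem_span_insert_self (x : P) (A : Set P) : x ∈ G.span (insert x A) :=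
  G.subset_span _ (Set.mem_insert x A)

lemma span_insert_span (x : P) (A : Set P) :
    G.span (insert x (G.span A)) = G.span (insert x A) :=
  (G.span_subset (G.isFlat_span _) (Set.insert_subset (G.mem_span_insert_self x A)
    (G.span_mono (Set.subset_insert x A)))).antisymm
    (G.span_mono (Set.insert_subset_insert (G.subset_span A)))

lemma span_eq_univ_of_subset {I A : Set P} (hI : G.span I = Set.univ)
    (h : I ⊆ G.span A) : G.span A = Set.univ :=
  Set.eq_univ_of_univ_subset (hI ▸ G.span_subset (G.isFlat_span A) h)

def cone (x : P) (t : Set P) : Set P := insert x (⋃ a ∈ t, G.line x a)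

variable {G}

lemma mem_cone {x y : P} {t : Set P} : y ∈ G.cone x t ↔ y = x ∨ ∃ a ∈ t, y ∈ G.line x a := by
  simp [cone]

lemma mem_cone_self (x : P) (t : Set P) : x ∈ G.cone x t := mem_cone.2 (Or.inl rfl)

lemma subset_cone (x : P) (t : Set P) : t ⊆ G.cone x t :=
  fun a ha => mem_cone.2 (Or.inr ⟨a, ha, G.right_mem_line x a⟩)

lemma mem_cone_of_mem_line_apex {x w y : P} {t : Set P} (hw : w ∈ G.cone x t)
    (hy : y ∈ G.line x w) : y ∈ G.cone x t := by
  by_cases hwx : w = x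
  · rw [hwx, G.line_self] at hy
    exact mem_cone.2 (Or.inl hy)
  obtain ⟨a, ha, hwa⟩ := (mem_cone.1 hw).resolve_left hwx
  exact mem_cone.2 (Or.inr ⟨a, ha, G.line_eq_of_mem hwa hwx ▸ hy⟩)

lemma mem_cone_of_mem_line_base {x a q y : P} {t : Set P} (ht : G.IsFlat t) (hxt : x ∉ t)
    (ha : a ∈ t) (hq : q ∈ G.cone x t) (hy : y ∈ G.line a q) : y ∈ G.cone x t := by
  by_cases hqx : q = x
  · subst hqx
    exact mem_cone.2 (Or.inr ⟨a, ha, G.line_symm a q ▸ hy⟩)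
  obtain ⟨b, hb, hqb⟩ := (mem_cone.1 hq).resolve_left hqx
  by_cases hya : y = a
  · exact hya ▸ subset_cone x t ha
  by_cases hyx : y = x
  · exact mem_cone.2 (Or.inl hyx)
  have hqa : q ≠ a := by
    rintro rfl
    rw [G.line_self] at hy
    exact hya hy
  by_cases hba : b = a
  · subst hba
    have hline : G.line q b = G.line x b :=
      G.line_unique x b q b (fun h => hxt (h ▸ hb)) hqb (G.right_mem_line x b) hqa
    exact mem_cone.2 (Or.inr ⟨b, hb, hline ▸ G.line_symm b q ▸ hy⟩)
  -- Veblen on the lines `xb` and `ya`, which meet in `q`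
  have hqya : q ∈ G.line y a := G.line_symm a y ▸ G.mem_line_exchange hy hya
  obtain ⟨c, hcxy, hcba⟩ := G.veblen x b y a q (fun h => hxt (h ▸ hb)) hya
    (Ne.symm hyx) hba hqb hqya
  have hct : c ∈ t := ht b hb a ha hcba
  exact mem_cone.2 (Or.inr ⟨c, hct, G.mem_line_exchange hcxy (fun h => hxt (h ▸ hct))⟩)

lemma isFlat_cone {x : P} {t : Set P} (ht : G.IsFlat t) (hxt : x ∉ t) :
    G.IsFlat (G.cone x t) := by
  intro p hp q hq y hy
  by_cases hpx : p = x
  · exact mem_cone_of_mem_line_apex hq (hpx ▸ hy)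
  by_cases hpt : p ∈ t
  · exact mem_cone_of_mem_line_base ht hxt hpt hq hy
  by_cases hqt : q ∈ t
  · exact mem_cone_of_mem_line_base ht hxt hqt hp (G.line_symm p q ▸ hy)
  by_cases hpq : p = q
  · rw [hpq, G.line_self] at hy
    exact (Set.mem_singleton_iff.1 hy) ▸ hq
  by_cases hyq : y = q
  · exact hyq ▸ hq
  by_cases hyx : y = x
  · exact mem_cone.2 (Or.inl hyx)
  obtain ⟨a, ha, hpa⟩ := (mem_cone.1 hp).resolve_left hpx
  have hax : a ≠ x := fun h => hxt (h ▸ ha)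
  have hpax : p ∈ G.line a x := G.line_symm x a ▸ hpa
  -- Veblen on the lines `ax` and `qy`, which meet in `p`
  have hpqy : p ∈ G.line q y := G.mem_line_exchange (G.line_symm p q ▸ hy) hyq
  obtain ⟨w, hwaq, hwxy⟩ := G.veblen a x q y p hax (Ne.symm hyq)
    (fun h => hqt (h ▸ ha)) (Ne.symm hyx) hpax hpqy
  have hw : w ∈ G.cone x t := mem_cone_of_mem_line_base ht hxt ha hq hwaq
  by_cases hwx : w = x
  · have hqax : q ∈ G.line a x := G.mem_line_exchange (hwx ▸ hwaq) (Ne.symm hax)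
    have hline : G.line p q = G.line a x := G.line_unique a x p q hax hpax hqax hpq
    exact mem_cone.2 (Or.inr ⟨a, ha, G.line_symm a x ▸ hline ▸ hy⟩)
  exact mem_cone_of_mem_line_apex hw (G.mem_line_exchange hwxy hwx)

lemma span_insert_eq_cone {t : Set P} (ht : G.IsFlat t) (x : P) :
    G.span (insert x t) = G.cone x t := by
  refine Set.Subset.antisymm ?_ fun y hy => ?_
  · by_cases hxt : x ∈ t
    · exact (G.span_subset ht (Set.insert_subset hxt subset_rfl)).trans (subset_cone x t)
    · exact G.span_subset (isFlat_cone ht hxt)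
        (Set.insert_subset (mem_cone_self x t) (subset_cone x t))
  rcases mem_cone.1 hy with rfl | ⟨a, ha, hya⟩
  · exact G.mem_span_insert_self y t
  · exact G.isFlat_span _ x (G.mem_span_insert_self x t) a
      (G.subset_span _ (Set.mem_insert_of_mem x ha)) hya

lemma mem_span_insert {t : Set P} (ht : G.IsFlat t) {x y : P} :
    y ∈ G.span (insert x t) ↔ y = x ∨ ∃ a ∈ t, y ∈ G.line x a := by
  rw [span_insert_eq_cone ht, mem_cone]

lemma isHyperplane_of_span_insert_eq_univ {F : Set P} (hF : G.IsFlat F) {a : P} (ha : a ∉ F)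
    (hsp : G.span (insert a F) = Set.univ) : G.IsHyperplane F := by
  refine ⟨hF, fun h => ha (h ▸ Set.mem_univ a), fun t ht hFt => ?_⟩
  by_cases htF : t ⊆ F
  · exact Or.inl (htF.antisymm hFt)
  obtain ⟨x, hxt, hxF⟩ := Set.not_subset.1 htF
  have hat : a ∈ t := by
    rcases (mem_span_insert hF).1 (hsp ▸ Set.mem_univ x) with rfl | ⟨z, hz, hxz⟩
    · exact hxt
    · have hxz' : x ∈ G.line z a := G.line_symm a z ▸ hxz
      exact ht z (hFt hz) x hxt (G.mem_line_exchange hxz' fun h => hxF (h ▸ hz))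
  exact Or.inr (Set.eq_univ_of_univ_subset
    (hsp ▸ G.span_subset ht (Set.insert_subset hat hFt)))

namespace IsHyperplane

variable {h : Set P}

lemma span_insert_eq_univ (hh : G.IsHyperplane h) {x : P} (hx : x ∉ h) :
    G.span (insert x h) = Set.univ :=
  (hh.2.2 _ (G.isFlat_span _) ((Set.subset_insert x h).trans (G.subset_span _))).resolve_left
    fun heq => hx (heq ▸ G.mem_span_insert_self x h)

lemma exists_mem_line (hh : G.IsHyperplane h) {p q : P} (hpq : p ≠ q) :
    ∃ z ∈ h, z ∈ G.line p q := by
  by_cases hp : p ∈ h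
  · exact ⟨p, hp, G.left_mem_line p q⟩
  rcases (mem_span_insert hh.1).1 (hh.span_insert_eq_univ hp ▸ Set.mem_univ q) with
    hqp | ⟨z, hz, hqz⟩
  · exact absurd hqp.symm hpq
  · exact ⟨z, hz, G.mem_line_exchange hqz (Ne.symm hpq)⟩

lemma eq_of_mem_line (hh : G.IsHyperplane h) {x y z₁ z₂ : P} (hx : x ∉ h)
    (h₁ : z₁ ∈ h) (h₂ : z₂ ∈ h) (m₁ : z₁ ∈ G.line x y) (m₂ : z₂ ∈ G.line x y) : z₁ = z₂ := by
  by_contra hne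
  rcases eq_or_ne x y with rfl | hxy
  · rw [G.line_self] at m₁
    exact hx (m₁ ▸ h₁)
  have hline : G.line z₁ z₂ = G.line x y := G.line_unique x y z₁ z₂ hxy m₁ m₂ hne
  exact hx (hh.1 z₁ h₁ z₂ h₂ (hline ▸ G.left_mem_line x y))

lemma span_insert_inter_eq (hh : G.IsHyperplane h) {t : Set P} (ht : G.IsFlat t) {x : P}
    (hxt : x ∈ t) (hxh : x ∉ h) : G.span (insert x (t ∩ h)) = t := by
  refine (G.span_subset ht (Set.insert_subset hxt Set.inter_subset_left)).antisymm
    fun q hq => ?_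
  by_cases hqx : q = x
  · rw [hqx]
    exact G.mem_span_insert_self x _
  obtain ⟨z, hzh, hzl⟩ := hh.exists_mem_line (Ne.symm hqx)
  have hzx : z ≠ x := fun h => hxh (h ▸ hzh)
  have hzt : z ∈ t := ht x hxt q hq hzl
  exact G.isFlat_span _ x (G.mem_span_insert_self x _) z
    (G.subset_span _ (Set.mem_insert_of_mem x (show z ∈ t ∩ h from ⟨hzt, hzh⟩)))
    (G.mem_line_exchange hzl hzx)

lemma mem_of_mem_span_insert (hh : G.IsHyperplane h) {s : Set P} (hs : G.IsFlat s)
    (hsh : s ⊆ h) {x y z : P} (hx : x ∉ h) (hy : y ∈ G.span (insert x s)) (hyx : y ≠ x)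
    (hzh : z ∈ h) (hz : z ∈ G.line x y) : z ∈ s := by
  obtain ⟨c, hc, hyc⟩ := ((mem_span_insert hs).1 hy).resolve_left hyx
  rw [G.line_eq_of_mem hyc hyx] at hz
  exact hh.eq_of_mem_line hx hzh (hsh hc) hz (G.right_mem_line x c) ▸ hc

lemma isHyperplane_span_insert_inter (hh : G.IsHyperplane h) {k : Set P}
    (hk : G.IsHyperplane k) (hkh : k ≠ h) {x : P} (hx : x ∉ h) :
    G.IsHyperplane (G.span (insert x (k ∩ h))) := by
  have hkhflat : G.IsFlat (k ∩ h) := G.isFlat_inter hk.1 hh.1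
  obtain ⟨z₀, hz₀h, hz₀k⟩ : ∃ z₀ ∈ h, z₀ ∉ k := by
    by_contra! hhk
    exact hk.2.1 ((hh.2.2 k hk.1 hhk).resolve_left hkh)
  set F := G.span (insert x (k ∩ h))
  have hz₀F : z₀ ∉ F := fun hz₀ => hz₀k
    (hh.mem_of_mem_span_insert hkhflat Set.inter_subset_right hx hz₀
      (fun e => hx (e ▸ hz₀h)) hz₀h (G.right_mem_line x z₀)).1
  -- `k ∩ h` is a hyperplane of `h`, so `h ⊆ span (insert z₀ F)`
  have hhF : h ⊆ G.span (insert z₀ F) := by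
    intro y hy
    by_cases hyz : y = z₀
    · exact hyz ▸ G.mem_span_insert_self z₀ F
    obtain ⟨c, hck, hcl⟩ := hk.exists_mem_line (Ne.symm hyz)
    have hcF : c ∈ F := G.subset_span _ (Set.mem_insert_of_mem x ⟨hck, hh.1 z₀ hz₀h y hy hcl⟩)
    exact G.isFlat_span _ z₀ (G.mem_span_insert_self z₀ F) c
      (G.subset_span _ (Set.mem_insert_of_mem z₀ hcF))
      (G.mem_line_exchange hcl fun e => hz₀k (e ▸ hck))
  refine isHyperplane_of_span_insert_eq_univ (G.isFlat_span _) hz₀F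
    (G.span_eq_univ_of_subset (hh.span_insert_eq_univ hx) (Set.insert_subset ?_ hhF))
  exact G.subset_span _ (Set.mem_insert_of_mem z₀ (G.mem_span_insert_self x _))

end IsHyperplane

lemma codim_le_card {H : Finset (Set P)} (hH : ∀ k ∈ H, G.IsHyperplane k) :
    G.codim (⋂₀ (H : Set (Set P))) ≤ H.card :=
  Nat.sInf_le ⟨H, rfl, hH, rfl⟩

lemma exists_card_eq_codim {H : Finset (Set P)} (hH : ∀ k ∈ H, G.IsHyperplane k) :
    ∃ H' : Finset (Set P), H'.card = G.codim (⋂₀ (H : Set (Set P))) ∧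
      (∀ k ∈ H', G.IsHyperplane k) ∧ ⋂₀ (H' : Set (Set P)) = ⋂₀ (H : Set (Set P)) :=
  Nat.sInf_mem (s := {n | ∃ H' : Finset (Set P), H'.card = n ∧ (∀ k ∈ H', G.IsHyperplane k) ∧
    ⋂₀ ↑H' = ⋂₀ (H : Set (Set P))}) ⟨H.card, H, rfl, hH, rfl⟩

lemma codim_add_one_le_card {t h : Set P} (ht : G.IsFlat t) (hh : G.IsHyperplane h) {x : P}
    (hxt : x ∈ t) (hxh : x ∉ h) {H' : Finset (Set P)} (hH' : ∀ k ∈ H', G.IsHyperplane k)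
    (hint : ⋂₀ ↑H' = t ∩ h) : G.codim t + 1 ≤ H'.card := by
  obtain ⟨h₀, hh₀, hxh₀⟩ : ∃ h₀ ∈ H', x ∉ h₀ := by
    by_contra! hx
    exact hxh (hint ▸ Set.mem_sInter.2 fun k hk => hx k hk).2
  have hh₀' := hH' h₀ hh₀
  set proj : Set P → Set P := fun k => G.span (insert x (k ∩ h₀))
  have hproj : ∀ k ∈ (H'.erase h₀).image proj, G.IsHyperplane k := by
    simp only [Finset.mem_image, Finset.mem_erase]
    rintro _ ⟨k, ⟨hkh₀, hk⟩, rfl⟩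
    exact hh₀'.isHyperplane_span_insert_inter (hH' k hk) hkh₀ hxh₀
  have hsub : ∀ k ∈ H', t ∩ h ⊆ k := fun k hk => hint ▸ Set.sInter_subset_of_mem hk
  have hcut : ⋂₀ ↑((H'.erase h₀).image proj) = t := by
    refine Set.Subset.antisymm (fun y hy => ?_) fun y hy => ?_
    · by_cases hyx : y = x
      · exact hyx ▸ hxt
      obtain ⟨z, hzh₀, hzl⟩ := hh₀'.exists_mem_line (Ne.symm hyx)
      have hz : z ∈ t ∩ h := hint ▸ Set.mem_sInter.2 fun k hk => by
        by_cases hkh₀ : k = h₀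
        · exact hkh₀ ▸ hzh₀
        have hyk : y ∈ proj k := Set.mem_sInter.1 hy _
          (Finset.mem_coe.2 (Finset.mem_image_of_mem proj (Finset.mem_erase.2 ⟨hkh₀, hk⟩)))
        exact (hh₀'.mem_of_mem_span_insert (G.isFlat_inter (hH' k hk).1 hh₀'.1)
          Set.inter_subset_right hxh₀ hyk hyx hzh₀ hzl).1
      exact ht x hxt z hz.1 (G.mem_line_exchange hzl fun e => hxh₀ (e ▸ hzh₀))
    · simp only [Finset.coe_image, Set.sInter_image, Set.mem_iInter₂]
      intro k hk
      rw [← hh.span_insert_inter_eq ht hxt hxh] at hy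
      exact G.span_mono (Set.insert_subset_insert (Set.subset_inter
        (hsub k (Finset.mem_of_mem_erase hk)) (hsub h₀ hh₀))) hy
  calc G.codim t + 1 ≤ ((H'.erase h₀).image proj).card + 1 := by
        rw [← hcut]; exact Nat.add_le_add_right (codim_le_card hproj) 1
    _ ≤ (H'.erase h₀).card + 1 := Nat.add_le_add_right Finset.card_image_le 1
    _ = H'.card := Finset.card_erase_add_one hh₀

lemma codim_inter_hyperplane {H : Finset (Set P)} (hH : ∀ k ∈ H, G.IsHyperplane k)
    {h : Set P} (hh : G.IsHyperplane h) {x : P} (hxH : x ∈ ⋂₀ ↑H) (hxh : x ∉ h) :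
    G.codim (⋂₀ ↑H ∩ h) = G.codim (⋂₀ ↑H) + 1 := by
  have hinsert : ∀ k ∈ insert h H, G.IsHyperplane k := by
    simpa only [Finset.forall_mem_insert] using ⟨hh, hH⟩
  have hcut : ⋂₀ ↑(insert h H) = ⋂₀ ↑H ∩ h := by
    rw [Finset.coe_insert, Set.sInter_insert, Set.inter_comm]
  refine le_antisymm ?_ ?_
  · obtain ⟨H₀, hcard, hH₀, hcut₀⟩ := exists_card_eq_codim hH
    have hins₀ : ∀ k ∈ insert h H₀, G.IsHyperplane k := by
      simpa only [Finset.forall_mem_insert] using ⟨hh, hH₀⟩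
    calc G.codim (⋂₀ ↑H ∩ h) = G.codim (⋂₀ ↑(insert h H₀)) := by
          rw [Finset.coe_insert, Set.sInter_insert, hcut₀, Set.inter_comm]
      _ ≤ (insert h H₀).card := codim_le_card hins₀
      _ ≤ H₀.card + 1 := Finset.card_insert_le h H₀
      _ = G.codim (⋂₀ ↑H) + 1 := by rw [hcard]
  · obtain ⟨H', hcard, hH', hcut'⟩ := exists_card_eq_codim hinsert
    rw [hcut] at hcard hcut'
    exact hcard ▸ codim_add_one_le_card (G.isFlat_sInter fun k hk => (hH k hk).1) hh hxH hxh
      hH' hcut'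

lemma Indep.notMem_span {I B : Set P} (hI : G.Indep I) {a : P} (ha : a ∈ I)
    (hB : B ⊆ I \ {a}) : a ∉ G.span B :=
  fun h => hI a ha (G.span_mono hB h)

lemma Indep.notMem_span_insert_of_mem_line {I B : Set P} (hI : G.Indep I) {a b p : P}
    (ha : a ∈ I) (hb : b ∈ I) (hp : p ∈ G.line a b) (hpa : p ≠ a) (hB : B ⊆ I \ {a, b}) :
    a ∉ G.span (insert p B) := by
  intro haB
  rw [← G.span_insert_span, mem_span_insert (G.isFlat_span B)] at haB
  obtain ⟨z, hzB, haz⟩ := haB.resolve_left (Ne.symm hpa)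
  have hza : z ≠ a := fun h => hI.notMem_span ha (fun c hc => ⟨(hB hc).1, fun e =>
    (hB hc).2 (Or.inl e)⟩) (h ▸ hzB)
  have hline : G.line a p = G.line a b := G.line_eq_of_mem hp hpa
  have hzab : z ∈ G.line a b := hline ▸ G.line_symm p a ▸ G.mem_line_exchange haz (Ne.symm hpa)
  have hbaB : b ∈ G.span (insert a B) := G.isFlat_span _ a (G.mem_span_insert_self a B) z
    (G.span_mono (Set.subset_insert a B) hzB) (G.mem_line_exchange hzab hza)
  have hab : a ≠ b := by
    rintro rfl
    rw [G.line_self] at hp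
    exact hpa hp
  refine hI.notMem_span hb (Set.insert_subset ⟨ha, hab⟩ fun c hc => ⟨(hB hc).1, fun e =>
    (hB hc).2 (Or.inr e)⟩) hbaB

variable {N E : Type*} {ν : N → P} {Γ : MGraph N E} {apex : E → P}

lemma image_notMem_ends_subset (hν : Function.Injective ν) (e : E) :
    ν '' {u | u ∉ Γ.ends e} ⊆ Set.range ν \ ν '' ↑(Γ.ends e) :=
  fun _ hb => ⟨Set.image_subset_range _ _ hb, Set.image_compl_subset hν hb⟩

lemma isLink_of_ends_eq_pair {e : E} {a b : N} (hab : a ≠ b) (h : Γ.ends e = {a, b}) :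
    Γ.IsLink e := by
  rw [MGraph.IsLink, h, Finset.card_pair hab]

lemma cevHyp_of_isLink {e : E} (he : Γ.IsLink e) :
    G.cevHyp ν Γ apex e = G.span (insert (apex e) (ν '' {u | u ∉ Γ.ends e})) := by
  rw [cevHyp, if_pos he, Set.union_singleton]

lemma cevHyp_of_not_isLink {e : E} (he : ¬ Γ.IsLink e) :
    G.cevHyp ν Γ apex e = G.span (ν '' {u | u ∉ Γ.ends e}) := by
  rw [cevHyp, if_neg he]

lemma nu_mem_cevHyp {e : E} {v : N} (hv : v ∉ Γ.ends e) : ν v ∈ G.cevHyp ν Γ apex e := by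
  unfold cevHyp
  split_ifs
  · exact G.subset_span _ (Set.mem_union_left _ ⟨v, hv, rfl⟩)
  · exact G.subset_span _ ⟨v, hv, rfl⟩

lemma nu_notMem_cevHyp (hν : Function.Injective ν) (hind : G.Indep (Set.range ν))
    (hcev : G.IsCevian ν Γ apex) {e : E} {v : N} (hv : v ∈ Γ.ends e) :
    ν v ∉ G.cevHyp ν Γ apex e := by
  rcases hcev e with ⟨a, b, hab, hends, hline, hnr⟩ | ⟨a, hends, -⟩
  · rw [cevHyp_of_isLink (isLink_of_ends_eq_pair hab hends)]
    have hB : ν '' {u | u ∉ Γ.ends e} ⊆ Set.range ν \ {ν a, ν b} :=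
      (image_notMem_ends_subset hν e).trans (by rw [hends, Finset.coe_pair, Set.image_pair])
    rw [hends, Finset.mem_insert, Finset.mem_singleton] at hv
    rcases hv with rfl | rfl
    · exact hind.notMem_span_insert_of_mem_line ⟨v, rfl⟩ ⟨b, rfl⟩ hline
        (fun h => hnr ⟨v, h.symm⟩) hB
    · exact hind.notMem_span_insert_of_mem_line ⟨v, rfl⟩ ⟨a, rfl⟩
        (G.line_symm (ν a) (ν v) ▸ hline) (fun h => hnr ⟨v, h.symm⟩)
        (Set.pair_comm (ν a) (ν v) ▸ hB)
  · rw [cevHyp_of_not_isLink (by simp [MGraph.IsLink, hends])]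
    have hB : ν '' {u | u ∉ Γ.ends e} ⊆ Set.range ν \ {ν a} :=
      (image_notMem_ends_subset hν e).trans
        (by rw [hends, Finset.coe_singleton, Set.image_singleton])
    rw [hends, Finset.mem_singleton] at hv
    exact hind.notMem_span (hv ▸ ⟨a, rfl⟩) (hv ▸ hB)

lemma isFlat_cevHyp (e : E) : G.IsFlat (G.cevHyp ν Γ apex e) := by
  unfold cevHyp
  split_ifs <;> exact G.isFlat_span _

lemma exists_ends_subset_span_insert_cevHyp (hcev : G.IsCevian ν Γ apex) (e : E) :
    ∃ v ∈ Γ.ends e, ν '' ↑(Γ.ends e) ⊆ G.span (insert (ν v) (G.cevHyp ν Γ apex e)) := by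
  rcases hcev e with ⟨a, b, hab, hends, hline, hnr⟩ | ⟨a, hends, -⟩
  · refine ⟨a, by simp [hends], ?_⟩
    rw [hends, Finset.coe_pair, Set.image_pair, Set.pair_subset_iff]
    refine ⟨G.mem_span_insert_self _ _, ?_⟩
    have hapex : apex e ∈ G.span (insert (ν a) (G.cevHyp ν Γ apex e)) := by
      refine G.subset_span _ (Set.mem_insert_of_mem _ ?_)
      rw [cevHyp_of_isLink (isLink_of_ends_eq_pair hab hends)]
      exact G.mem_span_insert_self _ _
    exact G.isFlat_span _ _ (G.mem_span_insert_self _ _) _ hapex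
      (G.mem_line_exchange hline fun h => hnr ⟨a, h.symm⟩)
  · refine ⟨a, by simp [hends], ?_⟩
    rw [hends, Finset.coe_singleton, Set.image_singleton, Set.singleton_subset_iff]
    exact G.mem_span_insert_self _ _

lemma isHyperplane_cevHyp (hν : Function.Injective ν) (hind : G.Indep (Set.range ν))
    (hspan : G.span (Set.range ν) = Set.univ) (hcev : G.IsCevian ν Γ apex) (e : E) :
    G.IsHyperplane (G.cevHyp ν Γ apex e) := by
  obtain ⟨v, hv, hends⟩ := exists_ends_subset_span_insert_cevHyp hcev e
  refine isHyperplane_of_span_insert_eq_univ (isFlat_cevHyp e)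
    (nu_notMem_cevHyp hν hind hcev hv) (G.span_eq_univ_of_subset hspan ?_)
  rintro _ ⟨u, rfl⟩
  by_cases hu : u ∈ Γ.ends e
  · exact hends ⟨u, hu, rfl⟩
  · exact G.subset_span _ (Set.mem_insert_of_mem _ (nu_mem_cevHyp hu))

end ProjGeom

theorem stmt8_general {P N E : Type*} (G : ProjGeom P) (ν : N → P)
    (hν : Function.Injective ν) (hind : G.Indep (Set.range ν))
    (hspan : G.span (Set.range ν) = Set.univ)
    (Γ : MGraph N E) (apex : E → P) (hcev : G.IsCevian ν Γ apex)
    (S : Finset E) (e : E) (heS : e ∈ S)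
    (hpend : ∃ v ∈ Γ.ends e, ∀ f ∈ S, f ≠ e → v ∉ Γ.ends f) :
    G.cevRk ν Γ apex S = G.cevRk ν Γ apex (S.erase e) + 1 := by
  obtain ⟨v, hve, hv⟩ := hpend
  have hinter : ∀ T : Finset E,
      ⋂ f ∈ T, G.cevHyp ν Γ apex f = ⋂₀ ↑(T.image (G.cevHyp ν Γ apex)) := fun T => by
    rw [Finset.coe_image, Set.sInter_image]; rfl
  have hhyp : ∀ k ∈ (S.erase e).image (G.cevHyp ν Γ apex), G.IsHyperplane k := by
    simp only [Finset.forall_mem_image]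
    exact fun f _ => ProjGeom.isHyperplane_cevHyp hν hind hspan hcev f
  have hvmem : ν v ∈ ⋂₀ ↑((S.erase e).image (G.cevHyp ν Γ apex)) := by
    rw [← hinter]
    simp only [Set.mem_iInter, Finset.mem_erase]
    exact fun f ⟨hfe, hfS⟩ => ProjGeom.nu_mem_cevHyp (hv f hfS hfe)
  unfold ProjGeom.cevRk
  conv_lhs => rw [← Finset.insert_erase heS]
  rw [Finset.set_biInter_insert, Set.inter_comm, hinter]
  exact ProjGeom.codim_inter_hyperplane hhyp
    (ProjGeom.isHyperplane_cevHyp hν hind hspan hcev e) hvmem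
    (ProjGeom.nu_notMem_cevHyp hν hind hcev hve)

/-- Pendance Reduction.  Let `A` be a Cevian arrangement of
apical hyperplanes over a point basis `N̂ = ν(N)` of a projective geometry, with
associated graph `Γ` and rank function `rk_P(S) = codim ⋂_{e∈S} h(ê)`.  If an
edge set `S` has a pendant edge `e` (a link one of whose endpoints meets no other
edge of `S`), then `rk_P(S) = rk_P(S∖e) + 1`. -/
theorem stmt8 {P N E : Type*} (G : ProjGeom P) (ν : N → P)
    (hν : Function.Injective ν) (hind : G.Indep (Set.range ν))
    (hspan : G.span (Set.range ν) = Set.univ)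
    (Γ : MGraph N E) (apex : E → P) (hcev : G.IsCevian ν Γ apex)
    (S : Finset E) (e : E) (heS : e ∈ S) (hlink : Γ.IsLink e)
    (hpend : ∃ v ∈ Γ.ends e, ∀ f ∈ S, f ≠ e → v ∉ Γ.ends f) :
    G.cevRk ν Γ apex S = G.cevRk ν Γ apex (S.erase e) + 1 :=
  stmt8_general G ν hν hind hspan Γ apex hcev S e heS hpend
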